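/- If H : Δ → ℝ satisfies generalized Shannon additivity with α = 2, then the following are equivalent: (a) H(p₁,...,pₙ) = 2H(1/2,1/2)(1 − Σᵢ pᵢ²) for all stochastic vectors; (b) H is bounded on Δ₂; (c) H is continuous on Δ₂; (d) H is symmetric on Δ₂; (e) H is nonnegative on Δ₂ or nonpositive on Δ₂. -/

import Mathlib

open Real

/-- A finite stochastic vector: nonnegative entries summing to 1. -/
def IsStochastic (l : List ℝ) : Prop :=
  (∀ x ∈ l, 0 ≤ x) ∧ l.sum = 1

/-- Generalized Shannon additivity with parameter `α`: merging two adjacent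
components of a stochastic vector. Powers are real powers (`rpow`). -/
def GSA (α : ℝ) (H : List ℝ → ℝ) : Prop :=
  ∀ (l₁ l₂ : List ℝ) (a b : ℝ), IsStochastic (l₁ ++ a :: b :: l₂) → 0 < a + b →
    H (l₁ ++ a :: b :: l₂) =
      H (l₁ ++ (a + b) :: l₂) + (a + b) ^ α * H [a / (a + b), b / (a + b)]


/-!
Write `g p = H [p, 1 - p]`. Merging `[x, y, 1 - x - y]` in the two possible orders gives a
linear functional equation (`FundEq`) solved by `g`, by `g (1 - ·)` and by `p (1 - p)`.
A symmetric solution vanishing at `1/2` vanishes on `[0, 1]`, so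
`g p + g (1 - p) = 8 g (1/2) p (1 - p)` always holds; a bounded antisymmetric solution vanishes
too. Hence each of (b)–(e) forces `g p = 4 g (1/2) p (1 - p)`, and merging the first two entries
repeatedly (zero entries can be dropped) gives the formula on every stochastic vector.
-/

open Set

variable {H : List ℝ → ℝ}

theorem isStochastic_pair {p : ℝ} (hp : p ∈ Icc (0 : ℝ) 1) : IsStochastic [p, 1 - p] := by
  obtain ⟨hp0, hp1⟩ := hp
  refine ⟨?_, by simp⟩
  simp only [List.mem_cons, List.not_mem_nil, or_false]
  rintro x (rfl | rfl) <;> linarith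

theorem isStochastic_triple {x y z : ℝ} (hx : 0 ≤ x) (hy : 0 ≤ y) (hz : 0 ≤ z)
    (h : x + y + z = 1) : IsStochastic [x, y, z] := by
  refine ⟨?_, by simp only [List.sum_cons, List.sum_nil]; linarith⟩
  simp only [List.mem_cons, List.not_mem_nil, or_false]
  rintro t (rfl | rfl | rfl) <;> assumption

theorem GSA.merge (hH : GSA 2 H) (l₁ l₂ : List ℝ) {a b : ℝ}
    (hs : IsStochastic (l₁ ++ a :: b :: l₂)) (hab : 0 < a + b) :
    H (l₁ ++ a :: b :: l₂) =
      H (l₁ ++ (a + b) :: l₂) + (a + b) ^ 2 * H [a / (a + b), b / (a + b)] := by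
  simpa only [← Real.rpow_natCast, Nat.cast_ofNat] using hH l₁ l₂ a b hs hab

theorem GSA.neg {α : ℝ} (hH : GSA α H) : GSA α (-H) := by
  intro l₁ l₂ a b hs hab
  simp only [Pi.neg_apply, hH l₁ l₂ a b hs hab]
  ring

theorem GSA.apply_singleton_one (hH : GSA 2 H) : H [1] = 0 := by
  have hs : IsStochastic [1, 0] := by simpa using isStochastic_pair (p := 1) (by simp)
  have h := hH.merge [] [] (a := 1) (b := 0) hs (by norm_num)
  norm_num at h
  exact h

def FundEq (f : ℝ → ℝ) : Prop :=
  ∀ x y : ℝ, 0 ≤ x → 0 ≤ y → x + y ≤ 1 → 0 < x + y → x < 1 →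
    f (x + y) + (x + y) ^ 2 * f (x / (x + y)) = f x + (1 - x) ^ 2 * f (y / (1 - x))

theorem GSA.fundEq (hH : GSA 2 H) : FundEq fun p => H [p, 1 - p] := by
  intro x y hx hy hxy hxy₀ hx₁
  have hst : IsStochastic [x, y, 1 - x - y] := isStochastic_triple hx hy (by linarith) (by ring)
  have e₁ := hH.merge [] [1 - x - y] (by simpa using hst) hxy₀
  have e₂ := hH.merge [x] [] (by simpa using hst) (by linarith : 0 < y + (1 - x - y))
  have h₁ : 1 - x ≠ 0 := by linarith
  simp only [List.nil_append, List.cons_append] at e₁ e₂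
  rw [show y + (1 - x - y) = 1 - x by ring, show (1 - x - y) / (1 - x) = 1 - y / (1 - x) by
    field_simp] at e₂
  rw [show y / (x + y) = 1 - x / (x + y) by field_simp; ring,
    show 1 - x - y = 1 - (x + y) by ring] at e₁
  rw [show 1 - x - y = 1 - (x + y) by ring] at e₂
  linarith

theorem fundEq_mul_one_sub : FundEq fun x => x * (1 - x) := by
  intro x y hx hy hxy hxy₀ hx₁
  have h₁ : 1 - x ≠ 0 := by linarith
  have h₂ : x + y ≠ 0 := hxy₀.ne'
  field_simp
  ring

namespace FundEq

variable {f g : ℝ → ℝ}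

theorem add (hf : FundEq f) (hg : FundEq g) : FundEq fun x => f x + g x := by
  intro x y h₁ h₂ h₃ h₄ h₅
  linear_combination hf x y h₁ h₂ h₃ h₄ h₅ + hg x y h₁ h₂ h₃ h₄ h₅

theorem sub (hf : FundEq f) (hg : FundEq g) : FundEq fun x => f x - g x := by
  intro x y h₁ h₂ h₃ h₄ h₅
  linear_combination hf x y h₁ h₂ h₃ h₄ h₅ - hg x y h₁ h₂ h₃ h₄ h₅

theorem const_mul (c : ℝ) (hf : FundEq f) : FundEq fun x => c * f x := by
  intro x y h₁ h₂ h₃ h₄ h₅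
  linear_combination c * hf x y h₁ h₂ h₃ h₄ h₅

/-- The equation at `(1 - x - y, y)` is the equation for `f (1 - ·)` at `(x, y)`. -/
theorem comp_one_sub (hf : FundEq f) : FundEq fun x => f (1 - x) := by
  intro x y hx hy hxy hxy₀ hx₁
  have h₁ : 1 - x ≠ 0 := by linarith
  have h₂ : x + y ≠ 0 := hxy₀.ne'
  have h := hf (1 - x - y) y (by linarith) hy (by linarith) (by linarith) (by linarith)
  rw [show 1 - x - y + y = 1 - x by ring, show (1 - x - y) / (1 - x) = 1 - y / (1 - x) by
      field_simp, show 1 - (1 - x - y) = x + y by ring,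
    show y / (x + y) = 1 - x / (x + y) by field_simp; ring,
    show 1 - x - y = 1 - (x + y) by ring] at h
  linarith

theorem apply_zero (hf : FundEq f) : f 0 = 0 := by
  have h := hf 0 (1 / 2) le_rfl (by norm_num) (by norm_num) (by norm_num) (by norm_num)
  norm_num at h
  linarith

/-- Three instances of the equation, at `(1/2, s - 1/2)`, `(1/2, 1/(2s) - 1/2)` and
`(1 - s, 1 - s)`, eliminate `f (1/(2s))`, `f (2s - 1)` and `f ((1 - s)/s)`. -/
theorem eq_zero_of_symm (hf : FundEq f) (hsymm : ∀ x, f (1 - x) = f x) (hhalf : f (1 / 2) = 0)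
    {x : ℝ} (hx : x ∈ Icc (0 : ℝ) 1) : f x = 0 := by
  have key : ∀ s : ℝ, 1 / 2 < s → s < 1 → f s = 0 := by
    intro s hs hs₁
    have hs₀ : s ≠ 0 := by linarith
    have hu₁ : 1 / 2 / s ≤ 1 := by rw [div_le_one₀ (by linarith)]; linarith
    have hu₂ : 1 / 2 ≤ 1 / 2 / s := by rw [le_div_iff₀ (by linarith)]; nlinarith
    have e₁ := hf (1 / 2) (s - 1 / 2) (by norm_num) (by linarith) (by linarith) (by linarith)
      (by norm_num)
    have e₂ := hf (1 / 2) (1 / 2 / s - 1 / 2) (by norm_num) (by linarith) (by linarith)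
      (by linarith) (by norm_num)
    have e₃ := hf (1 - s) (1 - s) (by linarith) (by linarith) (by linarith) (by linarith)
      (by linarith)
    rw [show 1 / 2 + (s - 1 / 2) = s by ring, show (s - 1 / 2) / (1 - 1 / 2) = 2 * s - 1 by ring,
      hhalf] at e₁
    rw [show 1 / 2 + (1 / 2 / s - 1 / 2) = 1 / 2 / s by ring,
      show 1 / 2 / (1 / 2 / s) = s by field_simp,
      show (1 / 2 / s - 1 / 2) / (1 - 1 / 2) = (1 - s) / s by field_simp; ring, hhalf] at e₂
    rw [show 1 - s + (1 - s) = 1 - (2 * s - 1) by ring, hsymm,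
      show (1 - s) / (1 - (2 * s - 1)) = 1 / 2 by rw [div_eq_iff (by linarith)]; ring, hhalf,
      sub_sub_cancel, hsymm] at e₃
    have hsq : s ^ 2 * (1 / 2 / s) ^ 2 = 1 / 4 := by field_simp; ring
    linear_combination 2 * e₁ - 2 * s ^ 2 * e₂ + 2 * f s * hsq + e₃ / 2
  obtain ⟨hx₀, hx₁⟩ := hx
  rcases lt_trichotomy x (1 / 2) with h | rfl | h
  · rcases hx₀.eq_or_lt with rfl | hx₀
    · exact hf.apply_zero
    · rw [← hsymm]; exact key _ (by linarith) (by linarith)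
  · exact hhalf
  · rcases hx₁.eq_or_lt with rfl | hx₁
    · rw [← hsymm, sub_self]; exact hf.apply_zero
    · exact key x h hx₁

/-- For an antisymmetric solution, the equation at `(x, 1 - 2x)` and at `(x, x)` give
`f (2x) = 2 f x` on `[0, 1/2]`, so every bound of `|f|` can be halved. -/
theorem eq_zero_of_antisymm (hf : FundEq f) (hanti : ∀ x, f (1 - x) = -f x) {M : ℝ}
    (hM : ∀ x ∈ Icc (0 : ℝ) 1, |f x| ≤ M) {x : ℝ} (hx : x ∈ Icc (0 : ℝ) 1) :
    f x = 0 := by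
  have hhalf : f (1 / 2) = 0 := by
    have := hanti (1 / 2)
    norm_num at this
    linarith
  have hdouble : ∀ x, 0 ≤ x → x ≤ 1 / 2 → f (2 * x) = 2 * f x := by
    intro x hx₀ hx₁
    rcases hx₀.eq_or_lt with rfl | hx₀
    · simp [hf.apply_zero]
    have h₁ : 1 - x ≠ 0 := by linarith
    have e₁ := hf x (1 - 2 * x) hx₀.le (by linarith) (by linarith) (by linarith) (by linarith)
    have e₂ := hf x x hx₀.le hx₀.le (by linarith) (by linarith) (by linarith)
    rw [show x + (1 - 2 * x) = 1 - x by ring,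
      show (1 - 2 * x) / (1 - x) = 1 - x / (1 - x) by field_simp; ring, hanti, hanti] at e₁
    rw [show x + x = 2 * x by ring, show x / (2 * x) = 1 / 2 by field_simp, hhalf] at e₂
    linear_combination e₂ + e₁ / 2
  have halve (B : ℝ) (hB : ∀ x ∈ Icc (0 : ℝ) 1, |f x| ≤ B) :
      ∀ x ∈ Icc (0 : ℝ) 1, |f x| ≤ B / 2 := by
    intro x ⟨hx₀, hx₁⟩
    have hlow : ∀ x, 0 ≤ x → x ≤ 1 / 2 → |f x| ≤ B / 2 := by
      intro x hx₀ hx₁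
      have := hB (2 * x) ⟨by linarith, by linarith⟩
      rw [hdouble x hx₀ hx₁, abs_mul, abs_two] at this
      linarith
    rcases le_total x (1 / 2) with h | h
    · exact hlow x hx₀ h
    · simpa [hanti] using hlow (1 - x) (by linarith) (by linarith)
  have hpow : ∀ n : ℕ, ∀ x ∈ Icc (0 : ℝ) 1, |f x| ≤ M * (1 / 2) ^ n := by
    intro n
    induction n with
    | zero => simpa using hM
    | succ n ih => simpa [pow_succ, ← mul_assoc, div_eq_mul_inv] using halve _ ih
  have hlim : Filter.Tendsto (fun n : ℕ => M * (1 / 2 : ℝ) ^ n) Filter.atTop (nhds 0) := by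
    simpa using (tendsto_pow_atTop_nhds_zero_of_lt_one (r := (1 / 2 : ℝ)) (by norm_num)
      (by norm_num)).const_mul M
  exact abs_nonpos_iff.mp (ge_of_tendsto' hlim fun n => hpow n x hx)

end FundEq

namespace GSA

variable (hH : GSA 2 H)
include hH

theorem apply_zero_one : H [0, 1] = 0 := by
  simpa using hH.fundEq.apply_zero

theorem pair_add_pair_swap {p : ℝ} (hp : p ∈ Icc (0 : ℝ) 1) :
    H [p, 1 - p] + H [1 - p, p] = 8 * H [1 / 2, 1 / 2] * (p * (1 - p)) := by
  have hS := (hH.fundEq.add hH.fundEq.comp_one_sub).sub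
    (fundEq_mul_one_sub.const_mul (8 * H [1 / 2, 1 / 2]))
  have h := hS.eq_zero_of_symm (fun x => by simp only [sub_sub_cancel]; ring)
    (by norm_num; ring) hp
  simp only [sub_sub_cancel] at h
  linarith

theorem pair_eq_of_bounded {M : ℝ} (hM : ∀ p ∈ Icc (0 : ℝ) 1, |H [p, 1 - p]| ≤ M)
    {p : ℝ} (hp : p ∈ Icc (0 : ℝ) 1) :
    H [p, 1 - p] = 4 * H [1 / 2, 1 / 2] * (p * (1 - p)) := by
  have hD := hH.fundEq.sub hH.fundEq.comp_one_sub
  have hbound : ∀ x ∈ Icc (0 : ℝ) 1, |H [x, 1 - x] - H [1 - x, 1 - (1 - x)]| ≤ M + M := by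
    intro x hx
    have := hM (1 - x) ⟨by linarith [hx.2], by linarith [hx.1]⟩
    exact (abs_sub _ _).trans (add_le_add (hM x hx) this)
  have h := hD.eq_zero_of_antisymm (fun x => by simp only [sub_sub_cancel]; ring) hbound hp
  simp only [sub_sub_cancel] at h
  linarith [hH.pair_add_pair_swap hp]

theorem apply_append_zero_cons (l₁ : List ℝ) {l : List ℝ} (hs : IsStochastic (l₁ ++ 0 :: l))
    (hl : 0 < l.sum) : H (l₁ ++ 0 :: l) = H (l₁ ++ l) := by
  induction l generalizing l₁ with
  | nil => simp at hl
  | cons q r ih =>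
    rcases (hs.1 q (by simp)).eq_or_lt with rfl | hq
    · have hr : 0 < r.sum := by simpa using hl
      have hs' : IsStochastic (l₁ ++ 0 :: r) := by
        refine ⟨fun x hx => hs.1 x ?_, by simpa using hs.2⟩
        simp only [List.mem_append, List.mem_cons] at hx ⊢
        tauto
      have h := ih (l₁ ++ [0]) (by simpa using hs) hr
      simp only [List.append_assoc, List.cons_append, List.nil_append] at h
      rw [h, ih l₁ hs' hr]
    · have h := hH.merge l₁ r hs (by linarith)
      rw [zero_add, zero_div, div_self hq.ne', hH.apply_zero_one] at h
      simpa using h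

theorem eq_of_pair_eq
    (hpair : ∀ p ∈ Icc (0 : ℝ) 1, H [p, 1 - p] = 4 * H [1 / 2, 1 / 2] * (p * (1 - p)))
    {l : List ℝ} (hl : IsStochastic l) :
    H l = 2 * H [1 / 2, 1 / 2] * (1 - (l.map fun p => p ^ 2).sum) := by
  obtain _ | ⟨a, t⟩ := l
  · simpa using hl.2
  induction t generalizing a with
  | nil =>
    obtain rfl : a = 1 := by simpa using hl.2
    simp [hH.apply_singleton_one]
  | cons b t ih =>
    have ha : 0 ≤ a := hl.1 a (by simp)
    have hb : 0 ≤ b := hl.1 b (by simp)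
    have hmerged : IsStochastic ((a + b) :: t) := by
      refine ⟨?_, by simpa [add_assoc] using hl.2⟩
      simp only [List.mem_cons, forall_eq_or_imp]
      exact ⟨add_nonneg ha hb, fun x hx => hl.1 x (by simp [hx])⟩
    rcases (add_nonneg ha hb).eq_or_lt with hab | hab
    · obtain ⟨rfl, rfl⟩ : a = 0 ∧ b = 0 := ⟨by linarith, by linarith⟩
      rw [zero_add] at hmerged
      have h := hH.apply_append_zero_cons [] hl (by rw [hmerged.2]; exact one_pos)
      rw [List.nil_append] at h
      simpa [h] using ih 0 hmerged
    · have h := hH.merge [] t (by simpa using hl) hab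
      simp only [List.nil_append] at h
      have hp : a / (a + b) ∈ Icc (0 : ℝ) 1 :=
        ⟨by positivity, (div_le_one hab).mpr (by linarith)⟩
      rw [show b / (a + b) = 1 - a / (a + b) by field_simp; ring, hpair _ hp, ih _ hmerged] at h
      rw [h]
      simp only [List.map_cons, List.sum_cons]
      field_simp
      ring

theorem abs_pair_le_of_nonneg (hnn : ∀ p ∈ Icc (0 : ℝ) 1, 0 ≤ H [p, 1 - p]) {p : ℝ}
    (hp : p ∈ Icc (0 : ℝ) 1) : |H [p, 1 - p]| ≤ 2 * H [1 / 2, 1 / 2] := by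
  have hsum := hH.pair_add_pair_swap hp
  have hswap := hnn (1 - p) ⟨by linarith [hp.2], by linarith [hp.1]⟩
  have hhalf := hnn (1 / 2) ⟨by norm_num, by norm_num⟩
  rw [sub_sub_cancel] at hswap
  norm_num at hhalf
  rw [abs_of_nonneg (hnn p hp)]
  nlinarith [mul_nonneg hhalf (sq_nonneg (2 * p - 1))]

end GSA

theorem pair_eq_of_forall_eq {c : ℝ}
    (h : ∀ l, IsStochastic l → H l = 2 * c * (1 - (l.map fun p => p ^ 2).sum)) {p : ℝ}
    (hp : p ∈ Icc (0 : ℝ) 1) :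
    H [p, 1 - p] = 4 * c * (p * (1 - p)) ∧ H [1 - p, p] = 4 * c * (p * (1 - p)) := by
  have hswap := isStochastic_pair (p := 1 - p) ⟨by linarith [hp.2], by linarith [hp.1]⟩
  rw [sub_sub_cancel] at hswap
  rw [h _ (isStochastic_pair hp), h _ hswap]
  constructor <;> simp <;> ring

theorem abs_four_mul_mul_one_sub_le (c : ℝ) {p : ℝ} (hp : p ∈ Icc (0 : ℝ) 1) :
    |4 * c * (p * (1 - p))| ≤ |c| := by
  have hq : 0 ≤ p * (1 - p) := mul_nonneg hp.1 (sub_nonneg.2 hp.2)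
  rw [abs_mul, abs_of_nonneg hq, abs_mul, abs_of_pos four_pos]
  nlinarith [mul_nonneg (abs_nonneg c) (sq_nonneg (2 * p - 1))]

theorem stmt_14 (H : List ℝ → ℝ) (hH : GSA 2 H) :
    List.TFAE
      [ ∀ l : List ℝ, IsStochastic l →
          H l = 2 * H [1/2, 1/2] * (1 - (l.map fun p => p ^ 2).sum),
        ∃ M : ℝ, ∀ p ∈ Set.Icc (0 : ℝ) 1, |H [p, 1 - p]| ≤ M,
        ContinuousOn (fun p => H [p, 1 - p]) (Set.Icc (0 : ℝ) 1) ∧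
          ContinuousOn (fun p => H [1 - p, p]) (Set.Icc (0 : ℝ) 1),
        ∀ p ∈ Set.Icc (0 : ℝ) 1, H [p, 1 - p] = H [1 - p, p],
        (∀ p ∈ Set.Icc (0 : ℝ) 1, 0 ≤ H [p, 1 - p]) ∨
          (∀ p ∈ Set.Icc (0 : ℝ) 1, H [p, 1 - p] ≤ 0) ] := by
  set c := H [1 / 2, 1 / 2]
  tfae_have 1 → 2 := fun h => ⟨|c|, fun p hp => by
    rw [(pair_eq_of_forall_eq h hp).1]; exact abs_four_mul_mul_one_sub_le c hp⟩
  tfae_have 2 → 1 := fun ⟨M, hM⟩ l hl =>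
    hH.eq_of_pair_eq (fun p hp => hH.pair_eq_of_bounded hM hp) hl
  tfae_have 1 → 3 := fun h =>
    ⟨(by fun_prop : Continuous fun p => 4 * c * (p * (1 - p))).continuousOn.congr
        fun p hp => (pair_eq_of_forall_eq h hp).1,
      (by fun_prop : Continuous fun p => 4 * c * (p * (1 - p))).continuousOn.congr
        fun p hp => (pair_eq_of_forall_eq h hp).2⟩
  tfae_have 3 → 2 := fun h => by
    simpa only [Real.norm_eq_abs] using isCompact_Icc.exists_bound_of_continuousOn h.1
  tfae_have 1 → 4 := fun h p hp => (pair_eq_of_forall_eq h hp).1.trans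
    (pair_eq_of_forall_eq h hp).2.symm
  tfae_have 4 → 1 := fun h l hl =>
    hH.eq_of_pair_eq (fun p hp => by linarith [h p hp, hH.pair_add_pair_swap hp]) hl
  tfae_have 1 → 5 := fun h => by
    rcases le_total 0 c with hc | hc
    · exact .inl fun p hp => by
        rw [(pair_eq_of_forall_eq h hp).1]; nlinarith [mul_nonneg hp.1 (sub_nonneg.2 hp.2)]
    · exact .inr fun p hp => by
        rw [(pair_eq_of_forall_eq h hp).1]; nlinarith [mul_nonneg hp.1 (sub_nonneg.2 hp.2)]
  tfae_have 5 → 2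
  | .inl h => ⟨2 * c, fun p hp => hH.abs_pair_le_of_nonneg h hp⟩
  | .inr h => ⟨2 * (-H) [1 / 2, 1 / 2], fun p hp => by
      simpa using hH.neg.abs_pair_le_of_nonneg (fun p hp => by simpa using h p hp) hp⟩
  tfae_finish
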